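/- arXiv:1702.08279 — 3 statements merged into one kernel-verified Lean document; each statement's English description precedes it below -/
import Mathlib

section
/- Assume in addition that C is braided monoidal. Then for all objects x and y of C, the translation endofunctor τ_x and the difference endofunctor δ_y commute up to natural isomorphism: there is a natural isomorphism τ_x ∘ δ_y ≅ δ_y ∘ τ_x of endofunctors of Fct(C, A). -/
open CategoryTheory CategoryTheory.Limits CategoryTheory.MonoidalCategory

variable {C : Type*} [Category C] [MonoidalCategory C]
variable {A : Type*} [Category A] [Abelian A]

/-- The translation endofunctor `τ_x` of `Fct(C, A)`: precomposition with `x ⊗ -`. -/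
noncomputable def tauF (A : Type*) [Category A] (x : C) : (C ⥤ A) ⥤ (C ⥤ A) :=
  (Functor.whiskeringLeft C C A).obj (tensorLeft x)

/-- The component `i_x(F) : F ⟶ τ_x F`, whose component at `c` is
`F` applied to `c ≅ 𝟙 ⊗ c ⟶ x ⊗ c`. -/
def iApp (hI : IsInitial (𝟙_ C)) (x : C) (F : C ⥤ A) : F ⟶ tensorLeft x ⋙ F where
  app c := F.map ((λ_ c).inv ≫ hI.to x ▷ c)
  naturality c c' f := by
    dsimp
    rw [← F.map_comp, ← F.map_comp]
    congr 1
    rw [leftUnitor_inv_naturality_assoc, whisker_exchange, Category.assoc]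

/-- The natural transformation `i_x : Id ⟶ τ_x` of endofunctors of `Fct(C, A)`. -/
noncomputable def iNT (hI : IsInitial (𝟙_ C)) (x : C) :
    𝟭 (C ⥤ A) ⟶ tauF A x where
  app F := iApp hI x F
  naturality F G η := by
    ext c
    exact (η.naturality _).symm

/-- The evanescence endofunctor `κ_x = ker(i_x)` of `Fct(C, A)`. -/
noncomputable def kappaF (hI : IsInitial (𝟙_ C)) (x : C) : (C ⥤ A) ⥤ (C ⥤ A) :=
  kernel (iNT (A := A) hI x)

/-- The difference endofunctor `δ_x = coker(i_x)` of `Fct(C, A)`. -/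
noncomputable def deltaF (hI : IsInitial (𝟙_ C)) (x : C) : (C ⥤ A) ⥤ (C ⥤ A) :=
  cokernel (iNT (A := A) hI x)

/-!
Precomposition with `x ⊗ -` is exact, so `τ_x` passes through the cokernel defining `δ_y` on
either side: `τ_x ∘ δ_y ≅ coker (τ_x i_y)` and `δ_y ∘ τ_x ≅ coker (i_y τ_x)`. The braiding
`y ⊗ x ⊗ - ≅ x ⊗ y ⊗ -` gives `τ_y ∘ τ_x ≅ τ_x ∘ τ_y`, and because the braiding of `𝟙` with `x`
is a composite of unitors, this isomorphism carries `τ_x i_y` to `i_y τ_x`. The two cokernels are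
therefore isomorphic.
-/

section CokernelCommute

variable {D : Type*} [Category D] [Preadditive D] [HasColimitsOfShape WalkingParallelPair D]

noncomputable def cokernelCompIsoCompCokernel (S T : D ⥤ D) [S.Additive]
    [PreservesColimitsOfShape WalkingParallelPair S] (ι : 𝟭 D ⟶ T) (e : T ⋙ S ≅ S ⋙ T)
    (he : ∀ X, S.map (ι.app X) ≫ e.hom.app X = ι.app (S.obj X)) :
    cokernel ι ⋙ S ≅ S ⋙ cokernel ι :=
  PreservesCokernel.iso ((Functor.whiskeringRight D D D).obj S) ι ≪≫
    cokernel.mapIso _ _ (Iso.refl S) e (by ext X; simpa using he X) ≪≫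
    (PreservesCokernel.iso ((Functor.whiskeringLeft D D D).obj S) ι).symm

end CokernelCommute

instance (x : C) : (tauF A x).Additive :=
  inferInstanceAs ((Functor.whiskeringLeft C C A).obj (tensorLeft x)).Additive

instance (x : C) : PreservesColimitsOfShape WalkingParallelPair (tauF A x) :=
  inferInstanceAs (PreservesColimitsOfShape WalkingParallelPair
    ((Functor.whiskeringLeft C C A).obj (tensorLeft x)))

section Braided

variable [BraidedCategory C]

noncomputable def tensorLeftCommIso (x y : C) :
    tensorLeft x ⋙ tensorLeft y ≅ tensorLeft y ⋙ tensorLeft x :=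
  (tensorLeftTensor y x).symm ≪≫ (curriedTensor C).mapIso (β_ y x) ≪≫ tensorLeftTensor x y

lemma tensorLeftCommIso_hom_app (x y c : C) :
    (tensorLeftCommIso x y).hom.app c = (α_ y x c).inv ≫ (β_ y x).hom ▷ c ≫ (α_ x y c).hom := by
  simp [tensorLeftCommIso]

lemma leftUnitor_inv_whiskerRight_tensorLeftCommIso_hom_app {y : C} (f : 𝟙_ C ⟶ y) (x c : C) :
    (λ_ (x ⊗ c)).inv ≫ f ▷ (x ⊗ c) ≫ (tensorLeftCommIso x y).hom.app c =
      x ◁ ((λ_ c).inv ≫ f ▷ c) := by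
  have hbraid : (λ_ x).inv ≫ f ▷ x ≫ (β_ y x).hom = (ρ_ x).inv ≫ x ◁ f := by
    rw [BraidedCategory.braiding_naturality_left, braiding_tensorUnit_left]
    simp
  calc (λ_ (x ⊗ c)).inv ≫ f ▷ (x ⊗ c) ≫ (tensorLeftCommIso x y).hom.app c
      = ((λ_ x).inv ≫ f ▷ x ≫ (β_ y x).hom) ▷ c ≫ (α_ x y c).hom := by
        rw [tensorLeftCommIso_hom_app]; monoidal
    _ = ((ρ_ x).inv ≫ x ◁ f) ▷ c ≫ (α_ x y c).hom := by rw [hbraid]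
    _ = x ◁ ((λ_ c).inv ≫ f ▷ c) := by monoidal

noncomputable def tauFCommIso (x y : C) : tauF A y ⋙ tauF A x ≅ tauF A x ⋙ tauF A y :=
  (Functor.whiskeringLeft C C A).mapIso (tensorLeftCommIso x y)

omit [Abelian A] in
lemma tauF_map_iNT_app_comp_tauFCommIso_hom_app (hI : IsInitial (𝟙_ C)) (x y : C) (F : C ⥤ A) :
    (tauF A x).map ((iNT hI y).app F) ≫ (tauFCommIso x y).hom.app F =
      (iNT hI y).app ((tauF A x).obj F) := by
  ext c
  simp only [tauF, iNT, iApp, tauFCommIso, NatTrans.comp_app, Functor.whiskeringLeft_obj_map,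
    Functor.whiskerLeft_app, Functor.mapIso_hom, Functor.whiskeringLeft_map_app_app,
    Functor.whiskeringLeft_obj_obj, Functor.comp_map, ← F.map_comp, Category.assoc]
  exact congrArg F.map (leftUnitor_inv_whiskerRight_tensorLeftCommIso_hom_app (hI.to y) x c)

end Braided

/-- The translation and difference endofunctors commute up to natural isomorphism:
`τ_x ∘ δ_y ≅ δ_y ∘ τ_x`. -/
theorem tau_comm_delta [BraidedCategory C] (hI : IsInitial (𝟙_ C)) (x y : C) :
    Nonempty ((deltaF (A := A) hI y ⋙ tauF A x) ≅ (tauF A x ⋙ deltaF hI y)) :=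
  ⟨cokernelCompIsoCompCokernel (tauF A x) (tauF A y) (iNT hI y) (tauFCommIso x y)
    (tauF_map_iNT_app_comp_tauFCommIso_hom_app hI x y)⟩
end

section
/- Let (C, ⊗, 𝟙) and (C', ⊗', 𝟙') be braided monoidal categories whose unit objects are initial, let α : C → C' be a strong monoidal functor, and let A be an abelian category. Then precomposition with α preserves strong polynomiality: for every n ≥ 0, if F : C' → A is strong polynomial of degree ≤ n (i.e., F ∈ Pol_n in Fct(C', A)), then F ∘ α is strong polynomial of degree ≤ n in Fct(C, A). -/
open CategoryTheory CategoryTheory.Limits CategoryTheory.MonoidalCategory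

section Defs

variable {C : Type*} [Category C] [MonoidalCategory C]
variable {A : Type*} [Category A] [Abelian A]

/-- `PolAux hI (n+1) F` says that `F` is strong polynomial of degree `≤ n`;
`PolAux hI 0 F` says that `F` is the zero functor (degree `≤ -1`). -/
def PolAux (hI : IsInitial (𝟙_ C)) : ℕ → (C ⥤ A) → Prop
  | 0 => fun F => IsZero F
  | n + 1 => fun F => ∀ x : C, PolAux hI n ((deltaF hI x).obj F)

/-- `Pol hI n F` : `F` is strong polynomial of degree `≤ n` (with `Pol_m = {0}` for `m < 0`). -/
def Pol (hI : IsInitial (𝟙_ C)) (n : ℤ) (F : C ⥤ A) : Prop :=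
  PolAux hI (n + 1).toNat F

end Defs

/-!
The unit of `C'` being initial forces `ι_{α x} = ε ≫ α(ι_x)`, so the tensorator `μ` of `α`
identifies `i_x(F ∘ α)` with `i_{α x}(F)` whiskered by `α`. Cokernels in functor categories are
computed pointwise, hence commute with precomposition, which gives
`δ_x(F ∘ α) ≅ δ_{α x}(F) ∘ α`; induction on the degree finishes the proof.
-/

section Precomp

variable {C : Type*} [Category C] [MonoidalCategory C]
variable {C' : Type*} [Category C'] [MonoidalCategory C']
variable (α : C ⥤ C') [α.Monoidal]
variable {A : Type*} [Category A]

lemma whiskerLeft_iApp_comp_commTensorLeft (hI : IsInitial (𝟙_ C))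
    (hI' : IsInitial (𝟙_ C')) (x : C) (F : C' ⥤ A) :
    Functor.whiskerLeft α (iApp hI' (α.obj x) F) ≫
        Functor.whiskerRight (Functor.Monoidal.commTensorLeft α x).hom F =
      iApp hI x (α ⋙ F) := by
  ext c
  dsimp [iApp]
  rw [← F.map_comp]
  congr 1
  have hι : hI'.to (α.obj x) = Functor.LaxMonoidal.ε α ≫ α.map (hI.to x) :=
    hI'.hom_ext _ _
  rw [hι, Functor.map_comp, Functor.Monoidal.map_leftUnitor_inv,
    Functor.Monoidal.map_whiskerRight]
  simp only [MonoidalCategory.comp_whiskerRight, Category.assoc,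
    Functor.Monoidal.μ_δ_assoc, Functor.Monoidal.commTensorLeft_hom_app]

variable [Abelian A]

lemma PolAux.of_iso {hI : IsInitial (𝟙_ C)} {n : ℕ} {F G : C ⥤ A} (hF : PolAux hI n F)
    (e : F ≅ G) : PolAux hI n G := by
  induction n generalizing F G with
  | zero => exact IsZero.of_iso hF e.symm
  | succ n ih => exact fun x => ih (hF x) ((deltaF hI x).mapIso e)

noncomputable def deltaObjIsoCokernel (hI : IsInitial (𝟙_ C)) (x : C) (F : C ⥤ A) :
    (deltaF hI x).obj F ≅ cokernel (iApp hI x F) :=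
  PreservesCokernel.iso ((evaluation (C ⥤ A) (C ⥤ A)).obj F) (iNT hI x)

noncomputable def deltaObjCompIso (hI : IsInitial (𝟙_ C)) (hI' : IsInitial (𝟙_ C'))
    (x : C) (F : C' ⥤ A) :
    (deltaF hI x).obj (α ⋙ F) ≅ α ⋙ (deltaF hI' (α.obj x)).obj F :=
  deltaObjIsoCokernel hI x (α ⋙ F) ≪≫
    (cokernel.mapIso (Functor.whiskerLeft α (iApp hI' (α.obj x) F))
      (iApp hI x (α ⋙ F)) (Iso.refl _)
      (Functor.isoWhiskerRight (Functor.Monoidal.commTensorLeft α x) F)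
      (by
        rw [Iso.refl_hom, Category.id_comp]
        exact whiskerLeft_iApp_comp_commTensorLeft α hI hI' x F)).symm ≪≫
    (PreservesCokernel.iso ((Functor.whiskeringLeft C C' A).obj α)
      (iApp hI' (α.obj x) F)).symm ≪≫
    ((Functor.whiskeringLeft C C' A).obj α).mapIso (deltaObjIsoCokernel hI' (α.obj x) F).symm

lemma PolAux.comp_monoidal (hI : IsInitial (𝟙_ C)) (hI' : IsInitial (𝟙_ C')) {n : ℕ}
    {F : C' ⥤ A} (hF : PolAux hI' n F) : PolAux hI n (α ⋙ F) := by
  induction n generalizing F with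
  | zero => exact Functor.isZero _ fun c => (Functor.isZero_iff F).mp hF (α.obj c)
  | succ n ih => exact fun x => (ih (hF (α.obj x))).of_iso (deltaObjCompIso α hI hI' x F).symm

end Precomp

theorem pol_precomp_strong_monoidal_general
    {C : Type*} [Category C] [MonoidalCategory C]
    {C' : Type*} [Category C'] [MonoidalCategory C']
    {A : Type*} [Category A] [Abelian A]
    (hI : IsInitial (𝟙_ C)) (hI' : IsInitial (𝟙_ C'))
    (α : C ⥤ C') [α.Monoidal]
    (n : ℕ) (F : C' ⥤ A) (hF : Pol hI' n F) :
    Pol hI n (α ⋙ F) :=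
  PolAux.comp_monoidal α hI hI' hF

/-- Precomposition with a strong monoidal functor between braided monoidal categories with
initial units preserves strong polynomiality of degree `≤ n`. -/
theorem pol_precomp_strong_monoidal
    {C : Type*} [Category C] [MonoidalCategory C] [BraidedCategory C]
    {C' : Type*} [Category C'] [MonoidalCategory C'] [BraidedCategory C']
    {A : Type*} [Category A] [Abelian A]
    (hI : IsInitial (𝟙_ C)) (hI' : IsInitial (𝟙_ C'))
    (α : C ⥤ C') [α.Monoidal]
    (n : ℕ) (F : C' ⥤ A) (hF : Pol hI' n F) :
    Pol hI n (α ⋙ F) :=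
  pol_precomp_strong_monoidal_general hI hI' α n F hF
end

section
/- For every natural number n ≥ 2, every index i with 1 ≤ i ≤ n−1, and every element w of the free group F_n, the following equality holds in the braid group B_{n+1}: σ_{i+1} · ς_n(w) · σ_{i+1}^{-1} = ς_n(A_i(w)), where A_i : F_n → F_n is the group endomorphism determined by A_i(g_i) = g_{i+1}, A_i(g_{i+1}) = g_{i+1}^{-1} g_i g_{i+1}, and A_i(g_j) = g_j for j ∉ {i, i+1} (the Artin action of the generator σ_i on F_n). This is the coherence Condition 2.9 of the paper for the Artin action a_{n,1} together with the morphisms ς_{n,1}: (id_1 ♮ σ) ∘ ς_n(g) = ς_n(a_{n,1}(σ)(g)) ∘ (id_1 ♮ σ) for every σ in B_n and g in F_n. -/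
open FreeGroup

/-- The braid relations on `m` Artin generators (indexed by `Fin m`, where index `k`
stands for the classical generator `σ_{k+1}`):
`σ_i σ_j σ_i = σ_j σ_i σ_j` when `|i - j| = 1` and `σ_i σ_j = σ_j σ_i` when `|i - j| ≥ 2`. -/
def braidRels (m : ℕ) : Set (FreeGroup (Fin m)) :=
  {r | (∃ i j : Fin m, (i : ℕ) + 1 = (j : ℕ) ∧
          r = of i * of j * of i * (of j * of i * of j)⁻¹) ∨
       (∃ i j : Fin m, (i : ℕ) + 2 ≤ (j : ℕ) ∧
          r = of i * of j * (of j * of i)⁻¹)}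

/-- `Braid m` is the braid group `B_{m+1}` on `m + 1` strands, presented with `m` Artin
generators `σ_1, …, σ_m` (index `k : Fin m` corresponds to `σ_{k+1}`). -/
abbrev Braid (m : ℕ) := PresentedGroup (braidRels m)

/-- `sig m k` is the Artin generator `σ_{k+1}` of the braid group `B_{m+1}` when `k < m`
(and junk value `1` otherwise). -/
def sig (m : ℕ) (k : ℕ) : Braid m :=
  if h : k < m then PresentedGroup.of (⟨k, h⟩ : Fin m) else 1

/-- `pword m j` is the product `σ_j σ_{j-1} ⋯ σ_1` in `B_{m+1}` (classical notation),
i.e. `sig m (j-1) * ⋯ * sig m 0`. -/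
def pword (m j : ℕ) : Braid m := ((List.range j).reverse.map (sig m)).prod

/-- The image of the free generator `g_{j+1}` of `F_n` under `ς_n : F_n → B_{n+1}`:
`σ_1⁻¹ σ_2⁻¹ ⋯ σ_{i-1}⁻¹ σ_i² σ_{i-1} ⋯ σ_2 σ_1` where `i = j + 1`. -/
def sigmaWord (n : ℕ) (j : Fin n) : Braid n :=
  (pword n j.val)⁻¹ * (sig n j.val) ^ 2 * pword n j.val

/-- The pure braid local system morphism `ς_n : F_n → B_{n+1}`, determined on the free
generators `g_1, …, g_n` of `F_n` (indexed by `Fin n`) by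
`ς_n(g_i) = σ_1⁻¹ σ_2⁻¹ ⋯ σ_{i-1}⁻¹ σ_i² σ_{i-1} ⋯ σ_2 σ_1`. -/
def varsigma (n : ℕ) : FreeGroup (Fin n) →* Braid n :=
  FreeGroup.lift (sigmaWord n)

/-- The Artin action of the generator `σ_{i₀+1}` (classical 1-based index `i₀ + 1`,
with `i₀ + 1 ≤ n - 1`) on the free group `F_n`: it sends `g_{i₀+1} ↦ g_{i₀+2}`,
`g_{i₀+2} ↦ g_{i₀+2}⁻¹ g_{i₀+1} g_{i₀+2}`, and fixes all other free generators
(indices here are 0-based: `j : Fin n` stands for the classical generator `g_{j+1}`). -/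
def artin (n : ℕ) (i : ℕ) (hi : i + 1 < n) : FreeGroup (Fin n) →* FreeGroup (Fin n) :=
  FreeGroup.lift fun j : Fin n =>
    if (j : ℕ) = i then FreeGroup.of (⟨i + 1, hi⟩ : Fin n)
    else if (j : ℕ) = i + 1 then
      (FreeGroup.of (⟨i + 1, hi⟩ : Fin n))⁻¹ *
        FreeGroup.of (⟨i, Nat.lt_of_succ_lt hi⟩ : Fin n) *
        FreeGroup.of (⟨i + 1, hi⟩ : Fin n)
    else FreeGroup.of j

/-!
Write `W_j = ς_n(g_j)`. The braid relation gives `W_{j+1} = σ_{j+1} W_j σ_{j+1}⁻¹`, and with far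
commutativity `σ_m` commutes with `W_j` whenever `m ≥ j + 2` or `2 ≤ m < j`. Hence conjugation
by `σ_{i+1}` acts on the `W_j` as `A_i` acts on the `g_j`, except at `g_{i+1}`, where one needs
that `W_i` commutes with `σ_{i+1} W_i σ_{i+1}`. Conjugating by `σ_{i-1} ⋯ σ_1`, this says that
`σ_i²` commutes with `σ_{i+1} σ_i² σ_{i+1}`, a consequence of the braid relation.
-/

section BraidRelation

variable {G : Type*} [Group G] {a b : G}

theorem inv_mul_mul_eq_of_braid (h : a * b * a = b * a * b) : a⁻¹ * b * a = b * a * b⁻¹ := by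
  calc a⁻¹ * b * a = a⁻¹ * (b * a * b) * b⁻¹ := by group
    _ = b * a * b⁻¹ := by rw [← h]; group

theorem inv_mul_sq_mul_eq_of_braid (h : a * b * a = b * a * b) :
    a⁻¹ * b ^ 2 * a = b * a ^ 2 * b⁻¹ := by
  calc a⁻¹ * b ^ 2 * a = (a⁻¹ * b * a) ^ 2 := by simp only [sq]; group
    _ = b * a ^ 2 * b⁻¹ := by rw [inv_mul_mul_eq_of_braid h]; simp only [sq]; group

theorem commute_mul_sq_mul_of_braid (h : a * b * a = b * a * b) : Commute a (b * a ^ 2 * b) := by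
  simp only [Commute, SemiconjBy, sq]
  calc a * (b * (a * a) * b) = (a * b * a) * a * b := by group
    _ = b * a * (b * a * b) := by rw [h]; group
    _ = b * (a * a) * b * a := by rw [← h]; group

theorem conj_conj_conj_eq_of_braid {u : G} (h : a * b * a = b * a * b) (hbu : Commute b u) :
    a * (b * (a * u * a⁻¹) * b⁻¹) * a⁻¹ = b * (a * u * a⁻¹) * b⁻¹ := by
  calc a * (b * (a * u * a⁻¹) * b⁻¹) * a⁻¹ = (a * b * a) * u * (a * b * a)⁻¹ := by group
    _ = b * (a * (b * u * b⁻¹) * a⁻¹) * b⁻¹ := by rw [h]; group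
    _ = b * (a * u * a⁻¹) * b⁻¹ := by rw [hbu.eq, mul_inv_cancel_right]

/-- `s² = (s u s⁻¹)⁻¹ (s u s)`, and `s u s` commutes with `u`. -/
theorem conj_conj_eq_of_commute {s u : G} (h : Commute u (s * u * s)) :
    s * (s * u * s⁻¹) * s⁻¹ = (s * u * s⁻¹)⁻¹ * u * (s * u * s⁻¹) := by
  calc s * (s * u * s⁻¹) * s⁻¹
        = (s * u * s⁻¹)⁻¹ * ((s * u * s) * u * (s * u * s)⁻¹) * (s * u * s⁻¹) := by group
    _ = (s * u * s⁻¹)⁻¹ * u * (s * u * s⁻¹) := by rw [← h.eq, mul_inv_cancel_right]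

end BraidRelation

section BraidGroup

variable {n : ℕ}

theorem sig_mul_sig_mul_sig {k : ℕ} (h : k + 1 < n) :
    sig n k * sig n (k + 1) * sig n k = sig n (k + 1) * sig n k * sig n (k + 1) := by
  have hk : k < n := by omega
  have hrel := PresentedGroup.mk_eq_mk_of_mul_inv_mem (rels := braidRels n)
    (Or.inl ⟨⟨k, hk⟩, ⟨k + 1, h⟩, rfl, rfl⟩)
  simp only [_root_.map_mul] at hrel
  simp only [sig, dif_pos hk, dif_pos h]
  exact hrel

theorem commute_sig_sig {k l : ℕ} (h : k + 2 ≤ l) : Commute (sig n k) (sig n l) := by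
  by_cases hl : l < n
  · have hk : k < n := by omega
    have hrel := PresentedGroup.mk_eq_mk_of_mul_inv_mem (rels := braidRels n)
      (Or.inr ⟨⟨k, hk⟩, ⟨l, hl⟩, h, rfl⟩)
    simp only [_root_.map_mul] at hrel
    simp only [sig, dif_pos hk, dif_pos hl]
    exact hrel
  · simp only [sig, dif_neg hl, Commute.one_right]

theorem pword_succ (j : ℕ) : pword n (j + 1) = sig n j * pword n j := by
  simp [pword, List.range_succ]

theorem commute_sig_pword {m j : ℕ} (h : j < m) : Commute (sig n m) (pword n j) := by
  induction j with
  | zero => exact Commute.one_right _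
  | succ j ih =>
    rw [pword_succ]
    exact ((commute_sig_sig (by omega)).symm).mul_right (ih (by omega))

/-- `sigmaWord` with the index taken in `ℕ`, so that it can be varied by induction. -/
def sigmaWordNat (n j : ℕ) : Braid n := (pword n j)⁻¹ * sig n j ^ 2 * pword n j

theorem varsigma_of (j : Fin n) : varsigma n (FreeGroup.of j) = sigmaWordNat n j :=
  FreeGroup.lift_apply_of

theorem sigmaWordNat_succ {j : ℕ} (h : j + 1 < n) :
    sigmaWordNat n (j + 1) = sig n (j + 1) * sigmaWordNat n j * (sig n (j + 1))⁻¹ := by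
  have hP : Commute (sig n (j + 1)) (pword n j) := commute_sig_pword (Nat.lt_succ_self j)
  calc sigmaWordNat n (j + 1)
        = (pword n j)⁻¹ * ((sig n j)⁻¹ * sig n (j + 1) ^ 2 * sig n j) * pword n j := by
          simp only [sigmaWordNat, pword_succ]; group
    _ = (pword n j)⁻¹ * sig n (j + 1) * sig n j ^ 2 * (sig n (j + 1))⁻¹ * pword n j := by
          rw [inv_mul_sq_mul_eq_of_braid (sig_mul_sig_mul_sig h)]; group
    _ = sig n (j + 1) * sigmaWordNat n j * (sig n (j + 1))⁻¹ := by
          rw [← hP.inv_right.eq, mul_assoc _ _ (pword n j), hP.inv_left.eq]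
          simp only [sigmaWordNat]; group

theorem commute_sig_sigmaWordNat_of_add_two_le {m j : ℕ} (h : j + 2 ≤ m) :
    Commute (sig n m) (sigmaWordNat n j) := by
  have hP : Commute (sig n m) (pword n j) := commute_sig_pword (by omega)
  exact (hP.inv_right.mul_right ((commute_sig_sig h).symm.pow_right 2)).mul_right hP

theorem commute_sig_sigmaWordNat_of_lt {m j : ℕ} (hm : 0 < m) (hmj : m < j) (hj : j < n) :
    Commute (sig n m) (sigmaWordNat n j) := by
  induction j, hmj using Nat.le_induction with
  | base =>
    obtain ⟨k, rfl⟩ : ∃ k, m = k + 1 := Nat.exists_eq_succ_of_ne_zero hm.ne'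
    have hconj := conj_conj_conj_eq_of_braid (sig_mul_sig_mul_sig hj)
      (commute_sig_sigmaWordNat_of_add_two_le (n := n) (m := k + 2) (j := k) le_rfl)
    rw [sigmaWordNat_succ hj, sigmaWordNat_succ (by omega)]
    exact mul_inv_eq_iff_eq_mul.mp hconj
  | succ j hmj ih =>
    have hs : Commute (sig n m) (sig n (j + 1)) := commute_sig_sig (by omega)
    rw [sigmaWordNat_succ hj]
    exact (hs.mul_right (ih (by omega))).mul_right hs.inv_right

theorem commute_sigmaWordNat_sig_mul_sigmaWordNat_mul_sig {i : ℕ} (h : i + 1 < n) :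
    Commute (sigmaWordNat n i) (sig n (i + 1) * sigmaWordNat n i * sig n (i + 1)) := by
  have hP : Commute (sig n (i + 1)) (pword n i) := commute_sig_pword (Nat.lt_succ_self i)
  have hc : Commute (sig n i ^ 2) (sig n (i + 1) * sig n i ^ 2 * sig n (i + 1)) :=
    (commute_mul_sq_mul_of_braid (sig_mul_sig_mul_sig h)).pow_left 2
  have hconj : sig n (i + 1) * sigmaWordNat n i * sig n (i + 1) =
      (pword n i)⁻¹ * (sig n (i + 1) * sig n i ^ 2 * sig n (i + 1)) * pword n i := by
    calc sig n (i + 1) * sigmaWordNat n i * sig n (i + 1)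
          = (sig n (i + 1) * (pword n i)⁻¹) * sig n i ^ 2 * (pword n i * sig n (i + 1)) := by
            simp only [sigmaWordNat]; group
      _ = (pword n i)⁻¹ * (sig n (i + 1) * sig n i ^ 2 * sig n (i + 1)) * pword n i := by
            rw [hP.inv_right.eq, ← hP.eq]; group
  rw [hconj]
  simpa only [sigmaWordNat, MulAut.conj_apply, inv_inv] using hc.map (MulAut.conj (pword n i)⁻¹)

theorem sig_conj_sigmaWordNat_succ {i : ℕ} (h : i + 1 < n) :
    sig n (i + 1) * sigmaWordNat n (i + 1) * (sig n (i + 1))⁻¹ =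
      (sigmaWordNat n (i + 1))⁻¹ * sigmaWordNat n i * sigmaWordNat n (i + 1) := by
  rw [sigmaWordNat_succ h]
  exact conj_conj_eq_of_commute (commute_sigmaWordNat_sig_mul_sigmaWordNat_mul_sig h)

theorem sig_conj_varsigma_of {i : ℕ} (hi : i + 1 < n) (j : Fin n) :
    sig n (i + 1) * varsigma n (FreeGroup.of j) * (sig n (i + 1))⁻¹ =
      varsigma n (artin n i hi (FreeGroup.of j)) := by
  obtain ⟨j, hj⟩ := j
  rw [artin, FreeGroup.lift_apply_of, varsigma_of]
  dsimp only
  rcases lt_trichotomy j i with hlt | rfl | hgt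
  · rw [if_neg hlt.ne, if_neg (by omega), varsigma_of,
      (commute_sig_sigmaWordNat_of_add_two_le (by omega)).eq, mul_inv_cancel_right]
  · rw [if_pos rfl, varsigma_of, sigmaWordNat_succ hi]
  · rcases (Nat.succ_le_of_lt hgt).eq_or_lt with rfl | hgt'
    · rw [if_neg (by omega), if_pos rfl, _root_.map_mul, _root_.map_mul, _root_.map_inv,
        varsigma_of, varsigma_of]
      exact sig_conj_sigmaWordNat_succ hi
    · rw [if_neg (by omega), if_neg (by omega), varsigma_of,
        (commute_sig_sigmaWordNat_of_lt (by omega) hgt' hj).eq, mul_inv_cancel_right]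

end BraidGroup

theorem varsigma_artin_conj_general (n : ℕ) (i₀ : ℕ) (hi : i₀ + 1 < n)
    (w : FreeGroup (Fin n)) :
    sig n (i₀ + 1) * varsigma n w * (sig n (i₀ + 1))⁻¹ =
      varsigma n (artin n i₀ hi w) := by
  have hom_eq : (MulAut.conj (sig n (i₀ + 1))).toMonoidHom.comp (varsigma n) =
      (varsigma n).comp (artin n i₀ hi) :=
    FreeGroup.ext_hom _ _ (sig_conj_varsigma_of hi)
  exact DFunLike.congr_fun hom_eq w

/-- For `n ≥ 2`, every Artin generator index `1 ≤ i ≤ n - 1` (here `i₀ = i - 1` is the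
0-based index, so `i₀ + 1 < n`) and every `w ∈ F_n`, the equality
`σ_{i+1} · ς_n(w) · σ_{i+1}⁻¹ = ς_n(A_i(w))` holds in `B_{n+1}`:
the coherence Condition 2.9 of the paper for the Artin action and the pure braid local
system morphisms `ς_n`. (Here `σ_{i+1} = sig n (i₀ + 1)` since `sig` is 0-indexed.) -/
theorem varsigma_artin_conj (n : ℕ) (hn : 2 ≤ n) (i₀ : ℕ) (hi : i₀ + 1 < n)
    (w : FreeGroup (Fin n)) :
    sig n (i₀ + 1) * varsigma n w * (sig n (i₀ + 1))⁻¹ =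
      varsigma n (artin n i₀ hi w) :=
  varsigma_artin_conj_general n i₀ hi w
end
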